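/- arXiv:2305.15598 — 4 statements merged into one kernel-verified Lean document; each statement's English description precedes it below -/
import Mathlib

section
/- Let L ≥ 2 be an integer, q = 2/(L-1), let a ∈ ℝ^K have all entries nonzero, and let W ∈ ℝ^{K×d}. Then the infimum over vectors λ ∈ ℝ^K with all entries positive of (1/L)‖D_λ a‖₂² + ((L-1)/L)‖D_λ^{-1} W‖_{S^q}^q equals Φ_L(D_a W), where D_a is the diagonal matrix with diagonal entries a. -/
/-!
Every positive `λ` factors as `λ_k |a_k| = t μ_k` with `t = ‖D_λ a‖₂ > 0` and `μ` a positive unit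
vector, and conversely. The Gram matrix of `D_μ⁻¹ D_a W` is `t²` times that of `D_λ⁻¹ W`, so
`‖D_μ⁻¹ D_a W‖_{S^q}^q = t^q ‖D_λ⁻¹ W‖_{S^q}^q` and the cost becomes `t²/L + (L-1)/L · t^{-q} B`
with `B = ‖D_μ⁻¹ D_a W‖_{S^q}^q`. By weighted AM-GM (`q (L-1)/L = 2/L`) its infimum over `t > 0`
is `B^{(L-1)/L} = ‖D_μ⁻¹ D_a W‖_{S^q}^{2/L}`; the infimum over `μ` is then `Φ_L(D_a W)`.
-/

open Matrix

/-- The singular values of a real `K × d` matrix `M`, given (in some order, with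
multiplicity, padded with zeros up to `d` values) as the square roots of the
eigenvalues of `Mᴴ M`. -/
noncomputable def matSingVal {K d : ℕ} (M : Matrix (Fin K) (Fin d) ℝ) (j : Fin d) : ℝ :=
  Real.sqrt ((Matrix.isHermitian_conjTranspose_mul_self M).eigenvalues j)

/-- `‖M‖_{S^q}^q = Σ_k σ_k(M)^q`, the `q`-th power of the Schatten-`q` quasi-norm. -/
noncomputable def schattenPow {K d : ℕ} (M : Matrix (Fin K) (Fin d) ℝ) (q : ℝ) : ℝ :=
  ∑ j, matSingVal M j ^ q

/-- The Schatten-`q` quasi-norm `‖M‖_{S^q} = (Σ_k σ_k(M)^q)^{1/q}`. -/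
noncomputable def schattenNorm {K d : ℕ} (M : Matrix (Fin K) (Fin d) ℝ) (q : ℝ) : ℝ :=
  schattenPow M q ^ (1 / q)

/-- `Φ_L(M) = inf { ‖D_λ⁻¹ M‖_{S^{2/(L-1)}}^{2/L} : λ ∈ ℝ^K, λ > 0, ‖λ‖₂ = 1 }`. -/
noncomputable def Phi (L : ℕ) {K d : ℕ} (M : Matrix (Fin K) (Fin d) ℝ) : ℝ :=
  sInf { r | ∃ l : Fin K → ℝ, (∀ k, 0 < l k) ∧ (∑ k, l k ^ 2) = 1 ∧
    r = schattenNorm (Matrix.diagonal (fun k => (l k)⁻¹) * M) (2 / ((L : ℝ) - 1)) ^ ((2 : ℝ) / L) }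

open Polynomial in
theorem Matrix.IsHermitian.sum_eigenvalues_eq_of_eq_smul {𝕜 n : Type*} [RCLike 𝕜] [Fintype n]
    [DecidableEq n] {A B : Matrix n n 𝕜} (hA : A.IsHermitian) (hB : B.IsHermitian) {c : ℝ}
    (h : B = c • A) (φ : ℝ → ℝ) :
    ∑ i, φ (hB.eigenvalues i) = ∑ i, φ (c * hA.eigenvalues i) := by
  have hpoly : ∏ i, (X - C ((hB.eigenvalues i : ℝ) : 𝕜))
      = ∏ i, (X - C ((c * hA.eigenvalues i : ℝ) : 𝕜)) := by
    rw [← hB.charpoly_eq, h, ← cfc_const_mul_id c A, hA.charpoly_cfc_eq]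
  have hroots (g : n → ℝ) :
      (∏ i, (X - C ((g i : ℝ) : 𝕜))).roots.map RCLike.re = Finset.univ.val.map g := by
    have hcomp : (fun i => X - C ((g i : ℝ) : 𝕜)) = (fun a => X - C a) ∘ fun i => (g i : 𝕜) := rfl
    rw [Finset.prod_eq_multiset_prod, hcomp, ← Multiset.map_map, roots_multiset_prod_X_sub_C,
      Multiset.map_map]
    simp only [Function.comp_def, RCLike.ofReal_re]
  calc ∑ i, φ (hB.eigenvalues i) = ((Finset.univ.val.map hB.eigenvalues).map φ).sum := by
        rw [Multiset.map_map]; rfl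
    _ = ((Finset.univ.val.map fun i => c * hA.eigenvalues i).map φ).sum := by
        rw [← hroots, hpoly, hroots]
    _ = ∑ i, φ (c * hA.eigenvalues i) := by rw [Multiset.map_map]; rfl

theorem schattenPow_nonneg {K d : ℕ} (M : Matrix (Fin K) (Fin d) ℝ) (q : ℝ) :
    0 ≤ schattenPow M q :=
  Finset.sum_nonneg fun _ _ => Real.rpow_nonneg (Real.sqrt_nonneg _) _

theorem schattenPow_eq_of_gram_eq_smul {K K' d : ℕ} {M : Matrix (Fin K) (Fin d) ℝ}
    {N : Matrix (Fin K') (Fin d) ℝ} {c : ℝ} (hc : 0 ≤ c) (h : Mᴴ * M = c ^ 2 • (Nᴴ * N))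
    (q : ℝ) : schattenPow M q = c ^ q * schattenPow N q := by
  rw [schattenPow, schattenPow, Finset.mul_sum]
  unfold matSingVal
  rw [(isHermitian_conjTranspose_mul_self N).sum_eigenvalues_eq_of_eq_smul
    (isHermitian_conjTranspose_mul_self M) h (fun x => Real.sqrt x ^ q)]
  refine Finset.sum_congr rfl fun j _ => ?_
  rw [Real.sqrt_mul (sq_nonneg c), Real.sqrt_sq hc, Real.mul_rpow hc (Real.sqrt_nonneg _)]

theorem schattenPow_eq_zero_of_gram_eq_zero {K d : ℕ} {M : Matrix (Fin K) (Fin d) ℝ}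
    (hM : Mᴴ * M = 0) {q : ℝ} (hq : q ≠ 0) : schattenPow M q = 0 := by
  rw [schattenPow_eq_of_gram_eq_smul le_rfl (N := M) (by rw [hM, smul_zero]), Real.zero_rpow hq,
    zero_mul]

theorem schattenPow_diagonal_mul_of_sq_eq {K d : ℕ} {u v : Fin K → ℝ} {c : ℝ} (hc : 0 ≤ c)
    (huv : ∀ k, u k ^ 2 = c ^ 2 * v k ^ 2) (Y : Matrix (Fin K) (Fin d) ℝ) (q : ℝ) :
    schattenPow (diagonal u * Y) q = c ^ q * schattenPow (diagonal v * Y) q := by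
  refine schattenPow_eq_of_gram_eq_smul hc ?_ q
  have hsq : (fun k => u k * u k) = c ^ 2 • fun k => v k * v k := by
    ext k; simpa [sq, mul_assoc] using huv k
  simp only [conjTranspose_mul, diagonal_conjTranspose, star_trivial, Matrix.mul_assoc,
    ← Matrix.mul_assoc (diagonal _), diagonal_mul_diagonal, hsq, diagonal_smul,
    Matrix.smul_mul, Matrix.mul_smul]

theorem schattenNorm_rpow_two_div (L : ℝ) {K d : ℕ} (M : Matrix (Fin K) (Fin d) ℝ) :
    schattenNorm M (2 / (L - 1)) ^ (2 / L) = schattenPow M (2 / (L - 1)) ^ ((L - 1) / L) := by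
  rw [schattenNorm, ← Real.rpow_mul (schattenPow_nonneg _ _), one_div_mul_eq_div,
    div_div_div_cancel_left' _ _ two_ne_zero]

section Scalar

open Filter Topology

variable {L : ℝ}

theorem rpow_le_rescaled_cost (hL : 1 < L) {t B : ℝ} (ht : 0 < t) (hB : 0 ≤ B) :
    (t ^ (2 / (L - 1)) * B) ^ ((L - 1) / L) ≤ 1 / L * t ^ 2 + (L - 1) / L * B := by
  have hL0 : 0 < L := by linarith
  have hL1 : 0 < L - 1 := by linarith
  have hexp : (t ^ (2 / (L - 1))) ^ ((L - 1) / L) = (t ^ 2) ^ (1 / L) := by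
    rw [← Real.rpow_mul ht.le, ← Real.rpow_two, ← Real.rpow_mul ht.le]
    congr 1
    field_simp
  rw [Real.mul_rpow (by positivity) hB, hexp]
  exact Real.geom_mean_le_arith_mean2_weighted (by positivity) (by positivity) (by positivity) hB
    (by field_simp; ring)

theorem le_rpow_of_forall_le_rescaled_cost (hL : 1 < L) {B x : ℝ} (hB : 0 ≤ B)
    (h : ∀ t > 0, x ≤ 1 / L * t ^ 2 + (L - 1) / L * (B / t ^ (2 / (L - 1)))) :
    x ≤ B ^ ((L - 1) / L) := by
  have hL0 : 0 < L := by linarith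
  have hL1 : 0 < L - 1 := by linarith
  -- `t ^ 2 = (B + η) ^ ((L - 1) / L)` balances the two terms up to `η`; the shift by `η` is
  -- needed when `B = 0`, where no `t > 0` attains the infimum
  have hη : ∀ η > 0, x ≤ (B + η) ^ ((L - 1) / L) := by
    intro η hη
    have hBη : 0 < B + η := by linarith
    set t := (B + η) ^ ((L - 1) / (2 * L))
    have ht : 0 < t := Real.rpow_pos_of_pos hBη _
    have ht2 : t ^ 2 = (B + η) ^ ((L - 1) / L) := by
      rw [← Real.rpow_two, ← Real.rpow_mul hBη.le]
      congr 1
      field_simp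
    have htq : B / t ^ (2 / (L - 1)) ≤ (B + η) ^ ((L - 1) / L) := by
      have : t ^ (2 / (L - 1)) = (B + η) ^ (1 / L) := by
        rw [← Real.rpow_mul hBη.le]
        congr 1
        field_simp
      calc B / t ^ (2 / (L - 1)) ≤ (B + η) ^ (1 : ℝ) / (B + η) ^ (1 / L) := by
            rw [this, Real.rpow_one]; gcongr; linarith
        _ = (B + η) ^ ((L - 1) / L) := by
            rw [← Real.rpow_sub hBη]
            congr 1
            field_simp
    calc x ≤ 1 / L * t ^ 2 + (L - 1) / L * (B / t ^ (2 / (L - 1))) := h t ht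
      _ ≤ 1 / L * (B + η) ^ ((L - 1) / L) + (L - 1) / L * (B + η) ^ ((L - 1) / L) := by
          rw [ht2]; gcongr
      _ = (B + η) ^ ((L - 1) / L) := by field_simp; ring
  have hlim : Tendsto (fun η => (B + η) ^ ((L - 1) / L)) (𝓝[>] 0) (𝓝 (B ^ ((L - 1) / L))) := by
    have := ((continuous_const_add B).rpow_const
      (fun _ => Or.inr (by positivity : (0 : ℝ) ≤ (L - 1) / L))).tendsto (0 : ℝ)
    simpa using this.mono_left nhdsWithin_le_nhds
  exact ge_of_tendsto hlim (eventually_nhdsWithin_of_forall hη)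

end Scalar

section Rescaling

variable {K d : ℕ}

noncomputable def rescaledCost (L : ℝ) (a : Fin K → ℝ) (W : Matrix (Fin K) (Fin d) ℝ)
    (l : Fin K → ℝ) : ℝ :=
  1 / L * ∑ k, (l k * a k) ^ 2 +
    (L - 1) / L * schattenPow (diagonal (fun k => (l k)⁻¹) * W) (2 / (L - 1))

theorem rescaledCost_nonneg {L : ℝ} (hL : 1 ≤ L) (a : Fin K → ℝ) (W : Matrix (Fin K) (Fin d) ℝ)
    (l : Fin K → ℝ) : 0 ≤ rescaledCost L a W l := by
  have := schattenPow_nonneg (diagonal (fun k => (l k)⁻¹) * W) (2 / (L - 1))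
  have : 0 ≤ L - 1 := by linarith
  unfold rescaledCost
  positivity

theorem schattenPow_diagonal_inv_mul_diagonal_mul {a l μ : Fin K → ℝ} {t : ℝ} (ht : 0 ≤ t)
    (hl : ∀ k, l k ≠ 0) (hμ : ∀ k, μ k ≠ 0) (h : ∀ k, (l k * a k) ^ 2 = t ^ 2 * μ k ^ 2)
    (W : Matrix (Fin K) (Fin d) ℝ) (q : ℝ) :
    schattenPow (diagonal (fun k => (μ k)⁻¹) * (diagonal a * W)) q =
      t ^ q * schattenPow (diagonal (fun k => (l k)⁻¹) * W) q := by
  rw [← Matrix.mul_assoc, diagonal_mul_diagonal]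
  refine schattenPow_diagonal_mul_of_sq_eq ht (fun k => ?_) W q
  have := h k
  field_simp [hl k, hμ k]
  linear_combination this

theorem le_Phi [Nonempty (Fin K)] (L : ℕ) (M : Matrix (Fin K) (Fin d) ℝ) {x : ℝ}
    (h : ∀ μ : Fin K → ℝ, (∀ k, 0 < μ k) → ∑ k, μ k ^ 2 = 1 →
      x ≤ schattenPow (diagonal (fun k => (μ k)⁻¹) * M) (2 / (L - 1)) ^ (((L : ℝ) - 1) / L)) :
    x ≤ Phi L M := by
  unfold Phi
  have hK : (0 : ℝ) < K := by exact_mod_cast Fin.pos_iff_nonempty.mpr ‹_›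
  refine le_csInf ⟨_, fun _ => (√K)⁻¹, fun _ => by positivity, ?_, rfl⟩ ?_
  · simp [Real.sq_sqrt hK.le, hK.ne']
  · rintro _ ⟨μ, hμ, hμ1, rfl⟩
    rw [schattenNorm_rpow_two_div]
    exact h μ hμ hμ1

theorem Phi_le (L : ℕ) (M : Matrix (Fin K) (Fin d) ℝ) {μ : Fin K → ℝ} (hμ : ∀ k, 0 < μ k)
    (hμ1 : ∑ k, μ k ^ 2 = 1) :
    Phi L M ≤
      schattenPow (diagonal (fun k => (μ k)⁻¹) * M) (2 / (L - 1)) ^ (((L : ℝ) - 1) / L) := by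
  unfold Phi
  rw [← schattenNorm_rpow_two_div]
  refine csInf_le ⟨0, ?_⟩ ⟨μ, hμ, hμ1, rfl⟩
  rintro _ ⟨μ, -, -, rfl⟩
  exact Real.rpow_nonneg (Real.rpow_nonneg (schattenPow_nonneg _ _) _) _

theorem sInf_rescaledCost_le {L : ℝ} (hL : 1 < L) {a : Fin K → ℝ} (ha : ∀ k, a k ≠ 0)
    (W : Matrix (Fin K) (Fin d) ℝ) {μ : Fin K → ℝ} (hμ : ∀ k, 0 < μ k) (hμ1 : ∑ k, μ k ^ 2 = 1) :
    sInf {r | ∃ l : Fin K → ℝ, (∀ k, 0 < l k) ∧ r = rescaledCost L a W l} ≤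
      schattenPow (diagonal (fun k => (μ k)⁻¹) * (diagonal a * W)) (2 / (L - 1)) ^
        ((L - 1) / L) := by
  refine le_rpow_of_forall_le_rescaled_cost hL (schattenPow_nonneg _ _) fun t ht => ?_
  set l : Fin K → ℝ := fun k => t * μ k / |a k|
  have hl (k : Fin K) : 0 < l k := by have := hμ k; have := ha k; positivity
  have hla (k : Fin K) : (l k * a k) ^ 2 = t ^ 2 * μ k ^ 2 := by
    have := ha k
    simp only [l, div_pow, mul_pow, sq_abs]
    field_simp
  have hbdd : BddBelow {r | ∃ l : Fin K → ℝ, (∀ k, 0 < l k) ∧ r = rescaledCost L a W l} := by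
    refine ⟨0, ?_⟩
    rintro _ ⟨l, -, rfl⟩
    exact rescaledCost_nonneg hL.le a W l
  refine (csInf_le hbdd ⟨l, hl, rfl⟩).trans_eq ?_
  rw [schattenPow_diagonal_inv_mul_diagonal_mul ht.le (fun k => (hl k).ne') (fun k => (hμ k).ne')
    hla, mul_div_cancel_left₀ _ (Real.rpow_pos_of_pos ht _).ne', rescaledCost,
    Finset.sum_congr rfl fun k _ => hla k, ← Finset.mul_sum, hμ1, mul_one]

theorem Phi_le_rescaledCost [Nonempty (Fin K)] {L : ℕ} (hL : 2 ≤ L) {a : Fin K → ℝ}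
    (ha : ∀ k, a k ≠ 0) (W : Matrix (Fin K) (Fin d) ℝ) {l : Fin K → ℝ} (hl : ∀ k, 0 < l k) :
    Phi L (diagonal a * W) ≤ rescaledCost L a W l := by
  have hL1 : (1 : ℝ) < L := by exact_mod_cast hL
  set s := √(∑ k, (l k * a k) ^ 2)
  have hs2 : s ^ 2 = ∑ k, (l k * a k) ^ 2 := Real.sq_sqrt (by positivity)
  have hs : 0 < s := Real.sqrt_pos.mpr <| Finset.sum_pos
    (fun k _ => by have := hl k; have := ha k; positivity) Finset.univ_nonempty
  set μ : Fin K → ℝ := fun k => l k * |a k| / s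
  have hμ (k : Fin K) : 0 < μ k := by have := hl k; have := ha k; positivity
  have hla (k : Fin K) : (l k * a k) ^ 2 = s ^ 2 * μ k ^ 2 := by
    simp only [μ, div_pow, mul_pow, sq_abs]
    field_simp
  have hμ1 : ∑ k, μ k ^ 2 = 1 := by
    refine mul_left_cancel₀ (pow_pos hs 2).ne' ?_
    rw [Finset.mul_sum, ← Finset.sum_congr rfl fun k _ => hla k, hs2, mul_one]
  calc Phi L (diagonal a * W)
      ≤ schattenPow (diagonal (fun k => (μ k)⁻¹) * (diagonal a * W)) (2 / (L - 1)) ^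
          (((L : ℝ) - 1) / L) := Phi_le L _ hμ hμ1
    _ = (s ^ (2 / ((L : ℝ) - 1)) * schattenPow (diagonal (fun k => (l k)⁻¹) * W)
          (2 / (L - 1))) ^ (((L : ℝ) - 1) / L) := by
        rw [schattenPow_diagonal_inv_mul_diagonal_mul hs.le (fun k => (hl k).ne')
          (fun k => (hμ k).ne') hla]
    _ ≤ rescaledCost L a W l := by
        rw [rescaledCost, ← hs2]
        exact rpow_le_rescaled_cost hL1 hs (schattenPow_nonneg _ _)

end Rescaling

/-- the infimum over positive rescalings `λ` of
`(1/L)‖D_λ a‖₂² + ((L-1)/L)‖D_λ⁻¹ W‖_{S^q}^q` equals `Φ_L(D_a W)`. -/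
theorem inf_rescaled_cost_eq_Phi {K d : ℕ} (L : ℕ) (hL : 2 ≤ L)
    (a : Fin K → ℝ) (ha : ∀ k, a k ≠ 0) (W : Matrix (Fin K) (Fin d) ℝ) :
    sInf { r | ∃ l : Fin K → ℝ, (∀ k, 0 < l k) ∧
        r = (1 / (L : ℝ)) * (∑ k, (l k * a k) ^ 2) +
          (((L : ℝ) - 1) / L) *
            schattenPow (Matrix.diagonal (fun k => (l k)⁻¹) * W) (2 / ((L : ℝ) - 1)) } =
      Phi L (Matrix.diagonal a * W) := by
  change sInf {r | ∃ l : Fin K → ℝ, (∀ k, 0 < l k) ∧ r = rescaledCost L a W l} = _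
  have hL1 : (1 : ℝ) < L := by exact_mod_cast hL
  rcases isEmpty_or_nonempty (Fin K) with hK | hK
  -- for `K = 0` every cost is `0`, and so is `Phi`, the infimum of the empty set
  · have hcost (l : Fin K → ℝ) : rescaledCost L a W l = 0 := by
      have hq : 2 / ((L : ℝ) - 1) ≠ 0 := div_ne_zero two_ne_zero (by linarith)
      rw [rescaledCost, schattenPow_eq_zero_of_gram_eq_zero (by ext; simp [Matrix.mul_apply]) hq]
      simp
    simp [Phi, hcost]
  · refine le_antisymm (le_Phi L _ fun μ hμ hμ1 => sInf_rescaledCost_le hL1 ha W hμ hμ1) ?_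
    refine le_csInf ⟨_, fun _ => 1, fun _ => one_pos, rfl⟩ ?_
    rintro _ ⟨l, hl, rfl⟩
    exact Phi_le_rescaledCost hL ha W hl
end

section
/- Let L ≥ 2 be an integer and let σ_1, …, σ_K be nonnegative real numbers, not all zero. Then the infimum, over vectors μ ∈ ℝ^K with all entries positive and ‖μ‖₂ = 1, of Σ_{k=1}^K σ_k^{2/(L-1)} · μ_k^{−2/(L-1)} equals (Σ_{k=1}^K σ_k^{2/L})^{L/(L-1)}. -/
/-!
With `x_k = μ_k²`, `a_k = σ_k^{2/L}` and `p = 1/(L-1)` the sum becomes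
`Σ a_k^{1+p} x_k^{-p} = Σ x_k (a_k/x_k)^{1+p}` over the open simplex, so Jensen's inequality for
`t ↦ t^{1+p}` bounds it below by `(Σ a_k)^{1+p}`. Equality holds at `x = a / Σ a`, which may lie on
the boundary of the simplex; the interior points `x = s a / Σ a + (1 - s) / K` give at most
`s^{-p} (Σ a_k)^{1+p}`, and `s → 1⁻` shows that the bound is the infimum.
-/

open Finset Real Filter Topology

theorem rpow_one_add_mul_rpow_neg_le {p a t y : ℝ} (hp : 0 ≤ p) (ha : 0 ≤ a) (ht : 0 < t)
    (hy : t * a ≤ y) : a ^ (1 + p) * y ^ (-p) ≤ a * t ^ (-p) := by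
  rcases ha.eq_or_lt with rfl | ha
  · simp [zero_rpow (by linarith : 1 + p ≠ 0)]
  calc a ^ (1 + p) * y ^ (-p) ≤ a ^ (1 + p) * (t * a) ^ (-p) :=
        mul_le_mul_of_nonneg_left (rpow_le_rpow_of_nonpos (by positivity) hy (neg_nonpos.2 hp))
          (by positivity)
    _ = a ^ (1 + p + -p) * t ^ (-p) := by rw [mul_rpow ht.le ha.le, rpow_add ha (1 + p)]; ring
    _ = a * t ^ (-p) := by rw [add_neg_cancel_right, rpow_one]

section

variable {ι : Type*} [Fintype ι] {p : ℝ} {a x : ι → ℝ}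

theorem rpow_sum_le_sum_rpow_mul_rpow_neg (hp : 0 ≤ p) (ha : ∀ i, 0 ≤ a i) (hx : ∀ i, 0 < x i)
    (hx₁ : ∑ i, x i = 1) : (∑ i, a i) ^ (1 + p) ≤ ∑ i, a i ^ (1 + p) * x i ^ (-p) := by
  have hterm : ∀ i, x i * (a i / x i) ^ (1 + p) = a i ^ (1 + p) * x i ^ (-p) := fun i => by
    rw [div_rpow (ha i) (hx i).le, show -p = 1 - (1 + p) by ring, rpow_sub (hx i), rpow_one]
    ring
  have hmean : ∀ i, x i * (a i / x i) = a i := fun i => mul_div_cancel₀ _ (hx i).ne'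
  simpa only [hterm, hmean] using rpow_arith_mean_le_arith_mean_rpow univ x (fun i => a i / x i)
    (fun i _ => (hx i).le) hx₁ (fun i _ => div_nonneg (ha i) (hx i).le) (by linarith : 1 ≤ 1 + p)

theorem exists_sum_rpow_mul_rpow_neg_le (hp : 0 ≤ p) (ha : ∀ i, 0 ≤ a i) (hA : 0 < ∑ i, a i)
    {s : ℝ} (hs₀ : 0 < s) (hs₁ : s < 1) :
    ∃ x : ι → ℝ, (∀ i, 0 < x i) ∧ ∑ i, x i = 1 ∧
      ∑ i, a i ^ (1 + p) * x i ^ (-p) ≤ s ^ (-p) * (∑ i, a i) ^ (1 + p) := by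
  have hn : (0 : ℝ) < Fintype.card ι := by
    obtain ⟨i, -, -⟩ := exists_ne_zero_of_sum_ne_zero hA.ne'
    exact_mod_cast Fintype.card_pos_iff.mpr ⟨i⟩
  have hε : 0 < (1 - s) / Fintype.card ι := div_pos (by linarith) hn
  refine ⟨fun i => s / (∑ j, a j) * a i + (1 - s) / Fintype.card ι, fun i => ?_, ?_, ?_⟩
  · have := ha i
    positivity
  · rw [sum_add_distrib, ← mul_sum, sum_const, card_univ, nsmul_eq_mul]
    field_simp
    ring
  · calc ∑ i, a i ^ (1 + p) * (s / (∑ j, a j) * a i + (1 - s) / Fintype.card ι) ^ (-p)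
        ≤ ∑ i, a i * (s / ∑ j, a j) ^ (-p) := by
          refine sum_le_sum fun i _ => ?_
          exact rpow_one_add_mul_rpow_neg_le hp (ha i) (div_pos hs₀ hA) (by linarith)
      _ = s ^ (-p) * (∑ i, a i) ^ (1 + p) := by
          rw [← sum_mul, div_rpow hs₀.le hA.le, rpow_neg hA.le, rpow_add hA, rpow_one]
          field_simp

theorem sInf_sum_rpow_mul_rpow_neg (hp : 0 ≤ p) (ha : ∀ i, 0 ≤ a i) (hA : 0 < ∑ i, a i) :
    sInf {r | ∃ x : ι → ℝ, (∀ i, 0 < x i) ∧ ∑ i, x i = 1 ∧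
        r = ∑ i, a i ^ (1 + p) * x i ^ (-p)} = (∑ i, a i) ^ (1 + p) := by
  set S := {r | ∃ x : ι → ℝ, (∀ i, 0 < x i) ∧ ∑ i, x i = 1 ∧
    r = ∑ i, a i ^ (1 + p) * x i ^ (-p)}
  have hlower : ∀ r ∈ S, (∑ i, a i) ^ (1 + p) ≤ r := by
    rintro r ⟨x, hx, hx₁, rfl⟩
    exact rpow_sum_le_sum_rpow_mul_rpow_neg hp ha hx hx₁
  have hupper : ∀ s ∈ Set.Ioo (0 : ℝ) 1, sInf S ≤ s ^ (-p) * (∑ i, a i) ^ (1 + p) := by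
    rintro s ⟨hs₀, hs₁⟩
    obtain ⟨x, hx, hx₁, hle⟩ := exists_sum_rpow_mul_rpow_neg_le hp ha hA hs₀ hs₁
    exact (csInf_le ⟨_, hlower⟩ ⟨x, hx, hx₁, rfl⟩).trans hle
  refine le_antisymm ?_ ?_
  · have hlim : Tendsto (fun s : ℝ => s ^ (-p) * (∑ i, a i) ^ (1 + p)) (𝓝[<] 1)
        (𝓝 ((∑ i, a i) ^ (1 + p))) := by
      simpa using ((continuousAt_rpow_const 1 (-p) (Or.inl one_ne_zero)).mul_const
        ((∑ i, a i) ^ (1 + p))).tendsto.mono_left nhdsWithin_le_nhds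
    exact ge_of_tendsto hlim (eventually_of_mem (Ioo_mem_nhdsLT one_pos) hupper)
  · obtain ⟨x, hx, hx₁, -⟩ := exists_sum_rpow_mul_rpow_neg_le hp ha hA one_half_pos one_half_lt_one
    exact le_csInf ⟨_, x, hx, hx₁, rfl⟩ hlower

theorem setOf_sum_sq_eq_one_eq_setOf_sum_eq_one {f g : ι → ℝ → ℝ}
    (hfg : ∀ i μ, 0 < μ → f i μ = g i (μ ^ 2)) :
    {r | ∃ μ : ι → ℝ, (∀ i, 0 < μ i) ∧ ∑ i, μ i ^ 2 = 1 ∧ r = ∑ i, f i (μ i)} =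
      {r | ∃ x : ι → ℝ, (∀ i, 0 < x i) ∧ ∑ i, x i = 1 ∧ r = ∑ i, g i (x i)} := by
  ext r
  constructor
  · rintro ⟨μ, hμ, hμ₁, rfl⟩
    exact ⟨fun i => μ i ^ 2, fun i => pow_pos (hμ i) 2, hμ₁,
      sum_congr rfl fun i _ => hfg i (μ i) (hμ i)⟩
  · rintro ⟨x, hx, hx₁, rfl⟩
    refine ⟨fun i => √(x i), fun i => sqrt_pos.2 (hx i), ?_, ?_⟩
    · simpa only [sq_sqrt (hx _).le] using hx₁
    · refine sum_congr rfl fun i _ => ?_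
      rw [hfg i _ (sqrt_pos.2 (hx i)), sq_sqrt (hx i).le]

end

theorem rpow_two_div_sub_one_mul_rpow_neg_two_div_sub_one {L s μ : ℝ} (hL : L ≠ 0)
    (hL₁ : L - 1 ≠ 0) (hs : 0 ≤ s) (hμ : 0 ≤ μ) :
    s ^ (2 / (L - 1)) * μ ^ (-2 / (L - 1)) =
      (s ^ (2 / L)) ^ (1 + 1 / (L - 1)) * (μ ^ 2) ^ (-(1 / (L - 1))) := by
  rw [← rpow_mul hs, ← rpow_natCast, ← rpow_mul hμ]
  congr 2 <;> field_simp <;> ring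

/-- for nonnegative `σ_1, …, σ_K` not all zero, the infimum over positive
unit vectors `μ` of `Σ_k σ_k^{2/(L-1)} μ_k^{-2/(L-1)}` equals `(Σ_k σ_k^{2/L})^{L/(L-1)}`. -/
theorem inf_weighted_power_sum {K : ℕ} (L : ℕ) (hL : 2 ≤ L) (σ : Fin K → ℝ)
    (hσ : ∀ k, 0 ≤ σ k) (hne : ∃ k, σ k ≠ 0) :
    sInf { r | ∃ μ : Fin K → ℝ, (∀ k, 0 < μ k) ∧ (∑ k, μ k ^ 2) = 1 ∧
        r = ∑ k, σ k ^ ((2 : ℝ) / ((L : ℝ) - 1)) * μ k ^ (-(2 : ℝ) / ((L : ℝ) - 1)) } =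
      (∑ k, σ k ^ ((2 : ℝ) / L)) ^ ((L : ℝ) / ((L : ℝ) - 1)) := by
  have hL₁ : (0 : ℝ) < L - 1 := by
    have : (2 : ℝ) ≤ L := by exact_mod_cast hL
    linarith
  have hpos : 0 < ∑ k, σ k ^ ((2 : ℝ) / L) := by
    obtain ⟨k, hk⟩ := hne
    exact sum_pos' (fun k _ => rpow_nonneg (hσ k) _)
      ⟨k, mem_univ k, rpow_pos_of_pos ((hσ k).lt_of_ne' hk) _⟩
  rw [setOf_sum_sq_eq_one_eq_setOf_sum_eq_one
      (g := fun k x => (σ k ^ ((2 : ℝ) / L)) ^ (1 + 1 / ((L : ℝ) - 1)) * x ^ (-(1 / ((L : ℝ) - 1))))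
      fun k μ hμ => rpow_two_div_sub_one_mul_rpow_neg_two_div_sub_one (by linarith) hL₁.ne'
        (hσ k) hμ.le,
    sInf_sum_rpow_mul_rpow_neg (by positivity) (fun k => rpow_nonneg (hσ k) _) hpos]
  congr 1
  field_simp
  ring
end

section
/- Let X ⊆ ℝ^d be a convex set with nonempty interior, let f : X → ℝ be given by f(x) = Σ_{k=1}^K a_k [w_kᵀ x + b_k]_+ + c, and let u ∈ ℝ^d. If for Lebesgue-almost every x ∈ X the function f is differentiable at x with ∇f(x)ᵀ u = 0, then f(x + u) = f(x) for every x ∈ X such that x + u ∈ X. -/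
open MeasureTheory

noncomputable section

abbrev Euc (d : ℕ) : Type := EuclideanSpace ℝ (Fin d)

def relu (t : ℝ) : ℝ := max t 0

end

/-! A ReLU network is Lipschitz. By Fubini, for almost every `z` the line `s ↦ z + s • u` meets
the exceptional null set in a null set, so along such a line inside the interior of `X` the network
is a Lipschitz function of `s` with derivative zero almost everywhere, hence constant. Continuity
upgrades `f (z + u) = f z` from almost every to every `z` with `z, z + u` interior, and moving `x`
and `x + u` towards an interior point (which shrinks the step to a multiple of `u`) reaches all
of `X`. -/

open MeasureTheory Set Filter Topology

section Lines

variable {E : Type*} [NormedAddCommGroup E] [NormedSpace ℝ E] [MeasurableSpace E] [BorelSpace E]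
  [SecondCountableTopology E] {μ : Measure E} [SFinite μ] [μ.IsAddRightInvariant]

theorem quasiMeasurePreserving_add_smul (v : E) :
    Measure.QuasiMeasurePreserving (fun p : E × ℝ => p.1 + p.2 • v) (μ.prod volume) μ := by
  have hmeas : Measurable fun p : E × ℝ => p.1 + p.2 • v := by fun_prop
  refine ⟨hmeas, Measure.AbsolutelyContinuous.mk fun A hA hμA => ?_⟩
  rw [Measure.map_apply hmeas hA, Measure.prod_apply_symm (hmeas hA)]
  simp [preimage_preimage, measure_preimage_add_right, hμA]

theorem ae_ae_add_smul {p : E → Prop} (h : ∀ᵐ x ∂μ, p x) (v : E) :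
    ∀ᵐ z ∂μ, ∀ᵐ s : ℝ, p (z + s • v) :=
  Measure.ae_ae_of_ae_prod ((quasiMeasurePreserving_add_smul v).ae h)

end Lines

theorem Convex.apply_add_eq_of_forall_interior {E F : Type*} [AddCommGroup E] [Module ℝ E]
    [TopologicalSpace E] [IsTopologicalAddGroup E] [ContinuousSMul ℝ E] [TopologicalSpace F]
    [T2Space F] {g : E → F} {X : Set E} (hX : Convex ℝ X)
    (hint : (interior X).Nonempty) (hg : Continuous g) {S : Submodule ℝ E}
    (h : ∀ x ∈ interior X, ∀ v ∈ S, x + v ∈ interior X → g (x + v) = g x) {x v : E} (hx : x ∈ X)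
    (hv : v ∈ S) (hxv : x + v ∈ X) : g (x + v) = g x := by
  obtain ⟨p, hp⟩ := hint
  have hpush : ∀ t ∈ Ioo (0 : ℝ) 1, g ((1 - t) • (x + v) + t • p) = g ((1 - t) • x + t • p) := by
    intro t ht
    have hxt := hX.combo_self_interior_mem_interior hx hp (sub_nonneg.2 ht.2.le) ht.1 (by ring)
    have hxvt := hX.combo_self_interior_mem_interior hxv hp (sub_nonneg.2 ht.2.le) ht.1 (by ring)
    have heq : (1 - t) • (x + v) + t • p = ((1 - t) • x + t • p) + (1 - t) • v := by
      rw [smul_add]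
      abel
    rw [heq] at hxvt ⊢
    exact h _ hxt _ (S.smul_mem _ hv) hxvt
  have hclosed : IsClosed {t : ℝ | g ((1 - t) • (x + v) + t • p) = g ((1 - t) • x + t • p)} :=
    isClosed_eq (by fun_prop) (by fun_prop)
  have h0 := hclosed.closure_subset_iff.2 hpush
    (by rw [closure_Ioo zero_ne_one]; exact left_mem_Icc.2 zero_le_one)
  simpa using h0

section LineDeriv

variable {E F : Type*} [NormedAddCommGroup E] [NormedSpace ℝ E] [NormedAddCommGroup F]
  [NormedSpace ℝ F] {K : NNReal} {g : E → F}

theorem HasLineDerivAt.hasDerivAt_add_smul {f' : F} {z v : E} {s : ℝ}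
    (h : HasLineDerivAt ℝ g f' (z + s • v) v) : HasDerivAt (fun t : ℝ => g (z + t • v)) f' s := by
  have h' : HasDerivAt (fun t : ℝ => g (z + s • v + t • v)) f' (s - s) := by
    rwa [sub_self]
  convert h'.comp_sub_const s s using 3 with t
  rw [sub_smul]
  abel

theorem LipschitzWith.apply_add_eq_of_ae_hasLineDerivAt_zero (hg : LipschitzWith K g) {z v : E}
    (h : ∀ᵐ s : ℝ, s ∈ Icc 0 1 → HasLineDerivAt ℝ g 0 (z + s • v) v) : g (z + v) = g z := by
  have hline : LipschitzWith (K * nndist z (z + v)) fun t : ℝ => g (z + t • v) := by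
    convert hg.comp (lipschitzWith_lineMap (𝕜 := ℝ) z (z + v)) using 2 with t
    simp [AffineMap.lineMap_apply, add_comm]
  obtain ⟨C, hC⟩ := hline.lipschitzOnWith.absolutelyContinuousOnInterval.const_of_ae_hasDerivAt_zero
    (a := 0) (b := 1) (by
      filter_upwards [h] with s hs hs01
      exact (hs (by rwa [uIcc_of_le zero_le_one] at hs01)).hasDerivAt_add_smul)
  simpa using (hC 1 (by simp)).trans (hC 0 (by simp)).symm

theorem LipschitzWith.apply_add_eq_of_ae_hasLineDerivAt_zero_of_isOpen [MeasurableSpace E]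
    [BorelSpace E] [SecondCountableTopology E] {μ : Measure E} [SFinite μ]
    [μ.IsAddRightInvariant] [μ.IsOpenPosMeasure] (hg : LipschitzWith K g) {U : Set E}
    (hU : IsOpen U) (hUc : Convex ℝ U) {v : E} (h : ∀ᵐ x ∂μ, x ∈ U → HasLineDerivAt ℝ g 0 x v)
    {x : E} (hx : x ∈ U) (hxv : x + v ∈ U) : g (x + v) = g x := by
  have hV : IsOpen (U ∩ (· + v) ⁻¹' U) := hU.inter (hU.preimage (continuous_add_const v))
  have hae : (fun y => g (y + v)) =ᵐ[μ.restrict (U ∩ (· + v) ⁻¹' U)] g := by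
    rw [EventuallyEq, ae_restrict_iff' hV.measurableSet]
    filter_upwards [ae_ae_add_smul h v] with y hy ⟨hyU, hyvU⟩
    apply hg.apply_add_eq_of_ae_hasLineDerivAt_zero
    filter_upwards [hy] with s hs hs01 using hs (hUc.add_smul_mem hyU hyvU hs01)
  exact Measure.eqOn_open_of_ae_eq hae hV
    (hg.continuous.comp (continuous_add_const v)).continuousOn hg.continuous.continuousOn ⟨hx, hxv⟩

theorem LipschitzWith.apply_add_eq_of_ae_hasLineDerivAt_zero_of_convex [MeasurableSpace E]
    [BorelSpace E] [SecondCountableTopology E] {μ : Measure E} [SFinite μ]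
    [μ.IsAddRightInvariant] [μ.IsOpenPosMeasure] (hg : LipschitzWith K g) {X : Set E}
    (hX : Convex ℝ X) (hint : (interior X).Nonempty) {u : E}
    (h : ∀ᵐ x ∂μ, x ∈ interior X → HasLineDerivAt ℝ g 0 x u) {x : E} (hx : x ∈ X)
    (hxu : x + u ∈ X) : g (x + u) = g x := by
  refine hX.apply_add_eq_of_forall_interior hint hg.continuous (S := ℝ ∙ u) ?_ hx
    (Submodule.mem_span_singleton_self u) hxu
  intro y hy v hv hyv
  obtain ⟨c, rfl⟩ := Submodule.mem_span_singleton.1 hv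
  refine hg.apply_add_eq_of_ae_hasLineDerivAt_zero_of_isOpen (μ := μ) isOpen_interior
    hX.interior ?_ hy hyv
  filter_upwards [h] with z hz hzX
  simpa using (hz hzX).smul c

end LineDeriv

theorem LipschitzWith.finset_sum {ι α E : Type*} [PseudoEMetricSpace α] [SeminormedAddCommGroup E]
    (s : Finset ι) {f : ι → α → E} {K : ι → NNReal} (h : ∀ i ∈ s, LipschitzWith (K i) (f i)) :
    LipschitzWith (∑ i ∈ s, K i) fun x => ∑ i ∈ s, f i x := by
  classical
  induction s using Finset.induction_on with
  | empty => simpa using LipschitzWith.const (0 : E)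
  | insert i s hi ih =>
    simp only [Finset.sum_insert hi]
    exact (h i (Finset.mem_insert_self i s)).add (ih fun j hj => h j (Finset.mem_insert_of_mem hj))

theorem lipschitzWith_relu : LipschitzWith 1 relu :=
  LipschitzWith.id.max_const 0

theorem EuclideanSpace.sum_mul_eq_inner {ι : Type*} [Fintype ι] (x y : EuclideanSpace ℝ ι) :
    ∑ i, x i * y i = inner ℝ x y := by
  rw [PiLp.inner_apply]
  simp only [RCLike.inner_apply, conj_trivial, mul_comm]

theorem exists_lipschitzWith_reluNetwork {d K : ℕ} (a : Fin K → ℝ) (w : Fin K → Euc d)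
    (b : Fin K → ℝ) (c : ℝ) :
    ∃ L, LipschitzWith L fun x : Euc d => (∑ k, a k * relu ((∑ i, w k i * x i) + b k)) + c := by
  simp only [EuclideanSpace.sum_mul_eq_inner, ← innerSL_apply_apply]
  exact ⟨_, (LipschitzWith.finset_sum Finset.univ fun k _ => (lipschitzWith_smul (a k)).comp
    (lipschitzWith_relu.comp ((innerSL ℝ (w k)).lipschitz.add (LipschitzWith.const (b k))))).add
    (LipschitzWith.const c)⟩

theorem EuclideanSpace.sum_gradient_mul_eq_fderiv {ι : Type*} [Fintype ι]
    (f : EuclideanSpace ℝ ι → ℝ) (x u : EuclideanSpace ℝ ι) :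
    ∑ i, gradient f x i * u i = fderiv ℝ f x u := by
  rw [EuclideanSpace.sum_mul_eq_inner, inner_gradient_left]

/-- if a two-layer ReLU network `f` on a convex set `X` with nonempty
interior has, for Lebesgue-a.e. `x ∈ X`, derivative orthogonal to `u`, then
`f(x + u) = f(x)` whenever `x, x + u ∈ X`. -/
theorem constant_along_ae_null_direction {d K : ℕ} (X : Set (Euc d))
    (hconv : Convex ℝ X) (hint : (interior X).Nonempty)
    (a : Fin K → ℝ) (w : Fin K → Euc d) (b : Fin K → ℝ) (c : ℝ)
    (f : Euc d → ℝ)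
    (hf : ∀ x ∈ X, f x = (∑ k, a k * relu ((∑ i, w k i * x i) + b k)) + c)
    (u : Euc d)
    (hgrad : ∀ᵐ x : Euc d, x ∈ X →
      DifferentiableAt ℝ f x ∧ (∑ i, gradient f x i * u i) = 0) :
    ∀ x ∈ X, x + u ∈ X → f (x + u) = f x := by
  intro x hx hxu
  obtain ⟨L, hL⟩ := exists_lipschitzWith_reluNetwork a w b c
  rw [hf x hx, hf (x + u) hxu]
  refine hL.apply_add_eq_of_ae_hasLineDerivAt_zero_of_convex (μ := volume) hconv hint ?_ hx hxu
  filter_upwards [hgrad] with y hy hyint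
  obtain ⟨hdiff, hzero⟩ := hy (interior_subset hyint)
  rw [EuclideanSpace.sum_gradient_mul_eq_fderiv] at hzero
  have hfg : f =ᶠ[𝓝 y] _ := eventually_of_mem (mem_interior_iff_mem_nhds.1 hyint) hf
  exact (hzero ▸ hdiff.hasFDerivAt.hasLineDerivAt u).congr_of_eventuallyEq hfg.symm
end

section
/- Let X ⊆ ℝ^d be a convex set with nonempty interior and suppose f(x) = Σ_{k=1}^K a_k [w_kᵀ x + b_k]_+ + vᵀx + c for all x ∈ X, where each w_k ≠ 0, the hyperplanes H_k = {x ∈ ℝ^d : w_kᵀ x + b_k = 0} are pairwise distinct, and each H_k intersects the interior of X. Then v ∈ range(Σ_ρ(f)), and w_k ∈ range(Σ_ρ(f)) for every k such that a_k ≠ 0. -/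
open MeasureTheory Matrix

noncomputable section

/-- Widths of an `L`-layer network: layer `0` (the input) has width `d`,
and hidden layer `i+1` has width `m i`. -/
def layerWidth (d : ℕ) (m : ℕ → ℕ) : ℕ → ℕ
  | 0 => d
  | i + 1 => m i

/-- An `L`-layer parameterization `θ = (W_1, …, W_{L-1}, a, b, c)` of arbitrary widths. -/
structure DeepParams (d L : ℕ) where
  m : ℕ → ℕ
  W : (i : Fin (L - 1)) → Matrix (Fin (layerWidth d m (i.1 + 1))) (Fin (layerWidth d m i.1)) ℝ
  a : Fin (layerWidth d m (L - 1)) → ℝ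
  b : Fin (layerWidth d m (L - 1)) → ℝ
  c : ℝ

/-- The product `W_j ⋯ W_2 W_1` of the first `j` linear layers. -/
def DeepParams.prodW {d L : ℕ} (θ : DeepParams d L) :
    (j : ℕ) → j ≤ L - 1 → Matrix (Fin (layerWidth d θ.m j)) (Fin d) ℝ
  | 0, _ => (1 : Matrix (Fin d) (Fin d) ℝ)
  | j + 1, h => θ.W ⟨j, by omega⟩ * θ.prodW j (by omega)

/-- The function `h_θ^{(L)}(x) = aᵀ [W_{L-1} ⋯ W_1 x + b]_+ + c`. -/
def DeepParams.fwd {d L : ℕ} (θ : DeepParams d L) (x : Euc d) : ℝ :=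
  (∑ k, θ.a k * relu ((θ.prodW (L - 1) le_rfl).mulVec x k + θ.b k)) + θ.c

/-- The cost `C_L(θ) = (1/L)(‖a‖₂² + ‖W_1‖_F² + ⋯ + ‖W_{L-1}‖_F²)`. -/
def DeepParams.cost {d L : ℕ} (θ : DeepParams d L) : ℝ :=
  (1 / (L : ℝ)) * ((∑ k, θ.a k ^ 2) + ∑ i : Fin (L - 1), ∑ p, ∑ q, θ.W i p q ^ 2)

/-- The representation cost `R_L(f)`. -/
def repCost {d : ℕ} (X : Set (Euc d)) (L : ℕ) (f : Euc d → ℝ) : ℝ :=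
  sInf { r | ∃ θ : DeepParams d L, (∀ x ∈ X, θ.fwd x = f x) ∧ r = θ.cost }

/-- Membership in `N(X)`: `f` is expressible on `X` as a two-layer ReLU network. -/
def MemN {d : ℕ} (X : Set (Euc d)) (f : Euc d → ℝ) : Prop :=
  ∃ (K : ℕ) (W : Matrix (Fin K) (Fin d) ℝ) (a b : Fin K → ℝ) (c : ℝ),
    ∀ x ∈ X, f x = (∑ k, a k * relu (W.mulVec x k + b k)) + c

/-- `X` is either a bounded convex set with nonempty interior, or all of `ℝ^d`. -/
def GoodDomain {d : ℕ} (X : Set (Euc d)) : Prop :=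
  (Bornology.IsBounded X ∧ Convex ℝ X ∧ (interior X).Nonempty) ∨ X = Set.univ

/-- `ρ` is a probability density, strictly positive on `X` and vanishing outside `X`. -/
def IsDensityOn {d : ℕ} (X : Set (Euc d)) (ρ : Euc d → ℝ) : Prop :=
  Measurable ρ ∧ (∀ x ∈ X, 0 < ρ x) ∧ (∀ x ∉ X, ρ x = 0) ∧ (∫ x, ρ x) = 1

/-- The gradient covariance matrix `Σ_ρ(f) = ∫ ∇f(x) ∇f(x)ᵀ ρ(x) dx`. -/
def gradCov {d : ℕ} (ρ : Euc d → ℝ) (f : Euc d → ℝ) : Matrix (Fin d) (Fin d) ℝ :=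
  Matrix.of fun i j => ∫ x, gradient f x i * gradient f x j * ρ x

lemma gradCov_isHermitian {d : ℕ} (ρ : Euc d → ℝ) (f : Euc d → ℝ) :
    (gradCov ρ f).IsHermitian := by
  show (gradCov ρ f)ᴴ = gradCov ρ f
  ext i j
  simp only [Matrix.conjTranspose_apply, star_trivial, gradCov, Matrix.of_apply]
  congr 1
  funext x
  ring

/-- The eigenvalues of a hermitian matrix, sorted in decreasing order:
`eigsDesc M hM k` is the `(k+1)`-st largest eigenvalue of `M`. -/
def eigsDesc {n : ℕ} (M : Matrix (Fin n) (Fin n) ℝ) (hM : M.IsHermitian) : Fin n → ℝ :=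
  fun k => (hM.eigenvalues ∘ Tuple.sort hM.eigenvalues) k.rev

/-- `σ_{k+1}(f) = λ_{k+1}(Σ_ρ(f))^{1/2}`, the `(k+1)`-st largest singular value of `f`
(indexed from `0`). -/
def funcSingVal {d : ℕ} (ρ : Euc d → ℝ) (f : Euc d → ℝ) (k : Fin d) : ℝ :=
  Real.sqrt (eigsDesc (gradCov ρ f) (gradCov_isHermitian ρ f) k)

/-- The mixed variation `MV_q(f) = (Σ_k σ_k(f)^q)^{1/q}`. -/
def mixedVar {d : ℕ} (ρ : Euc d → ℝ) (f : Euc d → ℝ) (q : ℝ) : ℝ :=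
  (∑ k, funcSingVal ρ f k ^ q) ^ (1 / q)

end

/-!
If `Σ_ρ(f) z = 0`, then `∫ ⟪z, ∇f⟫² ρ = zᵀ Σ_ρ(f) z = 0`, so `⟪z, ∇f⟫` vanishes almost everywhere
on `X`. Away from the hyperplanes `H_k`, `∇f(x) = v + ∑_{k active at x} a_k w_k` is locally
constant, and it jumps by exactly `a_k w_k` across `H_k` near a point of `H_k ∩ interior X` lying
on no other `H_j` (such a point exists because the hyperplanes are distinct). Comparing the two
sides gives `a_k ⟪z, w_k⟫ = 0`, and then any interior point gives `⟪z, v⟫ = 0`. Since `Σ_ρ(f)` is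
symmetric, its range is the orthogonal complement of its kernel.
-/

open Filter Topology Set
open scoped InnerProductSpace

lemma Matrix.IsHermitian.exists_mulVec_eq {𝕜 n : Type*} [RCLike 𝕜] [Fintype n] [DecidableEq n]
    {M : Matrix n n 𝕜} (hM : M.IsHermitian) {v : EuclideanSpace 𝕜 n}
    (hv : ∀ z : EuclideanSpace 𝕜 n, M *ᵥ z = 0 → ⟪z, v⟫_𝕜 = 0) : ∃ z, M *ᵥ z = v := by
  have hT := isSymmetric_toEuclideanLin_iff.mpr hM
  have hrange : v ∈ LinearMap.range M.toEuclideanLin := by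
    rw [← Submodule.orthogonal_orthogonal (LinearMap.range _), hT.orthogonal_range,
      Submodule.mem_orthogonal]
    intro z hz
    exact hv z (by simpa [toLpLin_apply] using hz)
  obtain ⟨z, hz⟩ := hrange
  exact ⟨z, by simpa [toLpLin_apply] using congrArg WithLp.ofLp hz⟩

lemma ae_eq_zero_or_inner_eq_zero_of_mulVec_eq_zero {α n : Type*} [MeasurableSpace α]
    {μ : Measure α} [Fintype n] {g : α → EuclideanSpace ℝ n} {ρ : α → ℝ} (hρ : 0 ≤ ρ)
    (hg : ∀ i j, Integrable (fun x => g x i * g x j * ρ x) μ) {z : EuclideanSpace ℝ n}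
    (hz : (Matrix.of fun i j => ∫ x, g x i * g x j * ρ x ∂μ) *ᵥ z = 0) :
    ∀ᵐ x ∂μ, ρ x = 0 ∨ ⟪z, g x⟫_ℝ = 0 := by
  have hexpand : ∀ x, ⟪z, g x⟫_ℝ ^ 2 * ρ x = ∑ i, ∑ j, z i * z j * (g x i * g x j * ρ x) := by
    intro x
    simp only [PiLp.inner_apply, RCLike.inner_apply, conj_trivial]
    rw [sq, Finset.sum_mul_sum, Finset.sum_mul]
    refine Finset.sum_congr rfl fun i _ => ?_
    rw [Finset.sum_mul]
    exact Finset.sum_congr rfl fun j _ => by ring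
  have hterm : ∀ i j, Integrable (fun x => z i * z j * (g x i * g x j * ρ x)) μ :=
    fun i j => (hg i j).const_mul _
  have hzero : ∫ x, ⟪z, g x⟫_ℝ ^ 2 * ρ x ∂μ = 0 := by
    simp_rw [hexpand]
    rw [integral_finsetSum _ fun i _ => integrable_finsetSum _ fun j _ => hterm i j]
    simp_rw [integral_finsetSum _ fun j _ => hterm _ j, integral_const_mul]
    calc ∑ i, ∑ j, z i * z j * ∫ x, g x i * g x j * ρ x ∂μ
        = z ⬝ᵥ ((Matrix.of fun i j => ∫ x, g x i * g x j * ρ x ∂μ) *ᵥ z) := by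
          simp only [dotProduct, mulVec, Matrix.of_apply, Finset.mul_sum]
          exact Finset.sum_congr rfl fun i _ => Finset.sum_congr rfl fun j _ => by ring
      _ = 0 := by rw [hz, dotProduct_zero]
  have hnonneg : 0 ≤ fun x => ⟪z, g x⟫_ℝ ^ 2 * ρ x := fun x => mul_nonneg (sq_nonneg _) (hρ x)
  have hquad : Integrable (fun x => ⟪z, g x⟫_ℝ ^ 2 * ρ x) μ := by
    simp_rw [hexpand]
    exact integrable_finsetSum _ fun i _ => integrable_finsetSum _ fun j _ => hterm i j
  filter_upwards [(integral_eq_zero_iff_of_nonneg hnonneg hquad).mp hzero] with x hx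
  simpa [or_comm] using hx

lemma Submodule.exists_mem_forall_notMem_of_forall_not_le {K V ι : Type*} [DivisionRing K]
    [Infinite K] [AddCommGroup V] [Module K V] [Finite ι] (W : Submodule K V)
    (p : ι → Submodule K V) (h : ∀ i, ¬ W ≤ p i) : ∃ u ∈ W, ∀ i, u ∉ p i := by
  by_contra! hcover
  obtain ⟨i, hi⟩ := Subspace.exists_eq_top_of_iUnion_eq_univ
    (p := fun i => (p i).comap W.subtype) (by ext u; simpa using hcover u u.2)
  exact h i fun u hu => by
    simpa using (hi ▸ Submodule.mem_top : (⟨u, hu⟩ : W) ∈ (p i).comap W.subtype)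

lemma eventually_pos_iff_of_ne_zero {X : Type*} [TopologicalSpace X] {g : X → ℝ} {x : X}
    (hg : ContinuousAt g x) (hx : g x ≠ 0) : ∀ᶠ y in 𝓝 x, (0 < g y ↔ 0 < g x) := by
  rcases hx.lt_or_gt with hneg | hpos
  · filter_upwards [hg.eventually_lt continuousAt_const hneg] with y hy
    exact iff_of_false hy.not_gt hneg.not_gt
  · filter_upwards [continuousAt_const.eventually_lt hg hpos] with y hy
    exact iff_of_true hy hpos

section InnerProductSpace

variable {E : Type*} [NormedAddCommGroup E] [InnerProductSpace ℝ E]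

lemma hasGradientAt_inner_add_const [CompleteSpace E] (g : E) (t : ℝ) (x : E) :
    HasGradientAt (fun y => ⟪g, y⟫_ℝ + t) g x := by
  rw [hasGradientAt_iff_hasFDerivAt]
  exact (innerSL ℝ g).hasFDerivAt.add_const t

lemma measure_setOf_inner_add_eq_zero [FiniteDimensional ℝ E] [MeasurableSpace E] [BorelSpace E]
    (μ : Measure E) [μ.IsAddHaarMeasure] {u : E} (hu : u ≠ 0) (t : ℝ) :
    μ {x | ⟪u, x⟫_ℝ + t = 0} = 0 := by
  have hu' : ‖u‖ ^ 2 ≠ 0 := by positivity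
  have hset : {x | ⟪u, x⟫_ℝ + t = 0} = (· + (t / ‖u‖ ^ 2) • u) ⁻¹' (ℝ ∙ u)ᗮ := by
    ext x
    simp [Submodule.mem_orthogonal_singleton_iff_inner_right, inner_add_right,
      real_inner_smul_right, hu']
  rw [hset, measure_preimage_add_right]
  exact Measure.addHaar_submodule μ _ (by simpa [Submodule.orthogonal_eq_top_iff] using hu)

lemma setOf_inner_add_eq_zero_eq_of_orthogonal_le {u u' q : E} {t t' : ℝ}
    (hle : (ℝ ∙ u)ᗮ ≤ (ℝ ∙ u')ᗮ) (hu' : u' ≠ 0) (hq : ⟪u, q⟫_ℝ + t = 0)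
    (hq' : ⟪u', q⟫_ℝ + t' = 0) : {x | ⟪u, x⟫_ℝ + t = 0} = {x | ⟪u', x⟫_ℝ + t' = 0} := by
  obtain ⟨s, rfl⟩ : ∃ s : ℝ, s • u = u' := by
    have hspan : ℝ ∙ u' ≤ ℝ ∙ u := by
      simpa only [Submodule.orthogonal_orthogonal] using Submodule.orthogonal_le hle
    exact Submodule.mem_span_singleton.mp (hspan (Submodule.mem_span_singleton_self u'))
  have hs : s ≠ 0 := by rintro rfl; simp at hu'
  have ht' : t' = s * t := by
    rw [real_inner_smul_left] at hq'
    linear_combination hq' - s * hq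
  ext x
  simp [real_inner_smul_left, ht', ← mul_add, hs]

lemma mem_closure_setOf_inner_add_pos {u p : E} {t : ℝ} (hu : u ≠ 0) (hp : ⟪u, p⟫_ℝ + t = 0) :
    p ∈ closure {x | 0 < ⟪u, x⟫_ℝ + t} := by
  have hlim : Tendsto (fun s : ℝ => p + s • u) (𝓝[>] 0) (𝓝 p) := by
    have hcont : Continuous fun s : ℝ => p + s • u := by fun_prop
    simpa using (hcont.tendsto 0).mono_left nhdsWithin_le_nhds
  refine mem_closure_of_tendsto hlim ?_
  filter_upwards [self_mem_nhdsWithin] with s (hs : 0 < s)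
  have hu' : 0 < ⟪u, u⟫_ℝ := real_inner_self_pos.mpr hu
  show 0 < ⟪u, p + s • u⟫_ℝ + t
  rw [inner_add_right, real_inner_smul_right]
  nlinarith

lemma exists_mem_hyperplane_notMem_others {ι : Type*} [Fintype ι] {w : ι → E} {b : ι → ℝ}
    {U : Set E} (hU : IsOpen U) (hw : ∀ j, w j ≠ 0)
    (hdist : ∀ j k, j ≠ k → {x | ⟪w j, x⟫_ℝ + b j = 0} ≠ {x | ⟪w k, x⟫_ℝ + b k = 0})
    {k : ι} (hk : ({x | ⟪w k, x⟫_ℝ + b k = 0} ∩ U).Nonempty) :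
    ∃ p ∈ U, ⟪w k, p⟫_ℝ + b k = 0 ∧ ∀ j ≠ k, ⟪w j, p⟫_ℝ + b j ≠ 0 := by
  obtain ⟨q, hqk, hqU⟩ := hk
  -- a direction inside `H_k` transversal to every other hyperplane through `q`
  obtain ⟨u, hu, htransv⟩ := (ℝ ∙ w k)ᗮ.exists_mem_forall_notMem_of_forall_not_le
    (fun j : {j // j ≠ k ∧ ⟪w j, q⟫_ℝ + b j = 0} => (ℝ ∙ w j.1)ᗮ)
    fun j hle => hdist k j.1 (Ne.symm j.2.1)
      (setOf_inner_add_eq_zero_eq_of_orthogonal_le hle (hw j) hqk j.2.2)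
  rw [Submodule.mem_orthogonal_singleton_iff_inner_right] at hu
  have hline : ∀ j (s : ℝ), ⟪w j, q + s • u⟫_ℝ + b j = (⟪w j, q⟫_ℝ + b j) + s * ⟪w j, u⟫_ℝ :=
    fun j s => by rw [inner_add_right, real_inner_smul_right]; ring
  have hU' : ∀ᶠ s in 𝓝[≠] (0 : ℝ), q + s • u ∈ U := by
    have hcont : Continuous fun s : ℝ => q + s • u := by fun_prop
    have hq : U ∈ 𝓝 ((fun s : ℝ => q + s • u) 0) := by simpa using hU.mem_nhds hqU
    exact nhdsWithin_le_nhds (hcont.continuousAt.preimage_mem_nhds hq)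
  have hothers : ∀ j, ∀ᶠ s in 𝓝[≠] (0 : ℝ), j ≠ k → ⟪w j, q + s • u⟫_ℝ + b j ≠ 0 := by
    intro j
    by_cases hjq : ⟪w j, q⟫_ℝ + b j = 0
    · filter_upwards [self_mem_nhdsWithin] with s (hs : s ≠ 0) hjk
      rw [hline, hjq, zero_add]
      refine mul_ne_zero hs fun hju => htransv ⟨j, hjk, hjq⟩ ?_
      exact Submodule.mem_orthogonal_singleton_iff_inner_right.mpr hju
    · have hcont : Continuous fun s : ℝ => ⟪w j, q + s • u⟫_ℝ + b j := by fun_prop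
      refine nhdsWithin_le_nhds ((hcont.continuousAt.eventually_ne (by simpa using hjq)).mono
        fun s hs _ => hs)
  obtain ⟨s, hsU, hs⟩ := (hU'.and (eventually_all.mpr hothers)).exists
  exact ⟨q + s • u, hsU, by rw [hline, hqk, hu, mul_zero, add_zero], hs⟩

end InnerProductSpace

section ReluNet

variable {E ι : Type*} [NormedAddCommGroup E] [InnerProductSpace ℝ E] [Fintype ι]
  (a : ι → ℝ) (w : ι → E) (b : ι → ℝ) (v : E) (c : ℝ)

noncomputable def reluNet (x : E) : ℝ :=
  ∑ k, a k * relu (⟪w k, x⟫_ℝ + b k) + ⟪v, x⟫_ℝ + c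

/-- The gradient of `reluNet` off the hyperplanes `⟪w k, x⟫ + b k = 0`; on them a unit counts as
inactive. -/
noncomputable def reluNetGrad (x : E) : E :=
  v + ∑ k, (if 0 < ⟪w k, x⟫_ℝ + b k then a k else 0) • w k

lemma reluNet_eventuallyEq {x : E} (hx : ∀ k, ⟪w k, x⟫_ℝ + b k ≠ 0) :
    reluNet a w b v c =ᶠ[𝓝 x] fun y => ⟪reluNetGrad a w b v x, y⟫_ℝ +
      (∑ k, (if 0 < ⟪w k, x⟫_ℝ + b k then a k else 0) * b k + c) := by
  have hsign : ∀ᶠ y in 𝓝 x, ∀ k, (0 < ⟪w k, y⟫_ℝ + b k ↔ 0 < ⟪w k, x⟫_ℝ + b k) :=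
    eventually_all.mpr fun k => eventually_pos_iff_of_ne_zero (by fun_prop) (hx k)
  filter_upwards [hsign] with y hy
  have hunit : ∀ k, a k * relu (⟪w k, y⟫_ℝ + b k) =
      (if 0 < ⟪w k, x⟫_ℝ + b k then a k else 0) * ⟪w k, y⟫_ℝ +
        (if 0 < ⟪w k, x⟫_ℝ + b k then a k else 0) * b k := by
    intro k
    by_cases h : 0 < ⟪w k, x⟫_ℝ + b k
    · rw [if_pos h, relu, max_eq_left ((hy k).mpr h).le]; ring
    · rw [if_neg h, relu, max_eq_right (not_lt.mp (mt (hy k).mp h))]; ring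
  simp only [reluNet, reluNetGrad, hunit, Finset.sum_add_distrib, inner_add_left, sum_inner,
    real_inner_smul_left]
  ring

lemma hasGradientAt_reluNet [CompleteSpace E] {x : E} (hx : ∀ k, ⟪w k, x⟫_ℝ + b k ≠ 0) :
    HasGradientAt (reluNet a w b v c) (reluNetGrad a w b v x) x :=
  (hasGradientAt_inner_add_const _ _ x).congr_of_eventuallyEq (reluNet_eventuallyEq a w b v c hx)

lemma ae_gradient_eq_reluNetGrad [FiniteDimensional ℝ E] [MeasurableSpace E] [BorelSpace E]
    (μ : Measure E) [μ.IsAddHaarMeasure] {X : Set E} (hX : Convex ℝ X) {f : E → ℝ}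
    (hf : ∀ x ∈ X, f x = reluNet a w b v c x) (hw : ∀ k, w k ≠ 0) :
    ∀ᵐ x ∂μ, x ∈ X → gradient f x = reluNetGrad a w b v x := by
  have hfrontier : ∀ᵐ x ∂μ, x ∉ frontier X :=
    measure_eq_zero_iff_ae_notMem.mp (hX.addHaar_frontier μ)
  have hunits : ∀ᵐ x ∂μ, ∀ k, ⟪w k, x⟫_ℝ + b k ≠ 0 :=
    ae_all_iff.mpr fun k => measure_eq_zero_iff_ae_notMem.mp
      (measure_setOf_inner_add_eq_zero μ (hw k) (b k))
  filter_upwards [hfrontier, hunits] with x hxfr hx hxX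
  have hxint : x ∈ interior X := by_contra fun h => hxfr ⟨subset_closure hxX, h⟩
  refine ((hasGradientAt_reluNet a w b v c hx).congr_of_eventuallyEq ?_).gradient
  filter_upwards [isOpen_interior.mem_nhds hxint] with y hy using hf y (interior_subset hy)

lemma norm_reluNetGrad_le (x : E) :
    ‖reluNetGrad a w b v x‖ ≤ ‖v‖ + ∑ k, |a k| * ‖w k‖ := by
  refine (norm_add_le _ _).trans (add_le_add_right ((norm_sum_le _ _).trans ?_) _)
  gcongr with k
  rw [norm_smul, Real.norm_eq_abs]
  exact mul_le_mul_of_nonneg_right (by split_ifs <;> simp) (norm_nonneg _)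

lemma measurable_reluNetGrad [FiniteDimensional ℝ E] [MeasurableSpace E] [BorelSpace E] :
    Measurable (reluNetGrad a w b v) := by
  have hcoeff : ∀ k, Measurable fun x : E => if 0 < ⟪w k, x⟫_ℝ + b k then a k else 0 :=
    fun k => Measurable.ite (measurableSet_lt measurable_const (by fun_prop))
      measurable_const measurable_const
  exact measurable_const.add (Finset.measurable_sum _ fun k _ => (hcoeff k).smul_const (w k))

lemma reluNetGrad_sub_reluNetGrad {x y : E} {k : ι} (hx : 0 < ⟪w k, x⟫_ℝ + b k)
    (hy : ¬ 0 < ⟪w k, y⟫_ℝ + b k)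
    (hother : ∀ j ≠ k, (0 < ⟪w j, x⟫_ℝ + b j ↔ 0 < ⟪w j, y⟫_ℝ + b j)) :
    reluNetGrad a w b v x - reluNetGrad a w b v y = a k • w k := by
  rw [reluNetGrad, reluNetGrad, add_sub_add_left_eq_sub, ← Finset.sum_sub_distrib,
    Finset.sum_eq_single k]
  · simp [hx, hy]
  · intro j _ hjk
    rw [if_congr (hother j hjk) rfl rfl, sub_self]
  · simp

lemma inner_reluNetGrad_eq_inner_of_forall {z : E} (hz : ∀ k, a k ≠ 0 → ⟪z, w k⟫_ℝ = 0)
    (x : E) : ⟪z, reluNetGrad a w b v x⟫_ℝ = ⟪z, v⟫_ℝ := by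
  have hunits : ∑ k, (if 0 < ⟪w k, x⟫_ℝ + b k then a k else 0) * ⟪z, w k⟫_ℝ = 0 :=
    Finset.sum_eq_zero fun k _ => by
      by_cases hak : a k = 0
      · simp [hak]
      · simp [hz k hak]
  simp only [reluNetGrad, inner_add_right, inner_sum, real_inner_smul_right, hunits, add_zero]

lemma mul_inner_eq_zero_of_dense_inner_reluNetGrad_eq_zero {U : Set E} (hU : IsOpen U) {z : E}
    (hdense : Dense {x | x ∈ U → ⟪z, reluNetGrad a w b v x⟫_ℝ = 0}) {p : E} (hpU : p ∈ U)
    {k : ι} (hwk : w k ≠ 0) (hk : ⟪w k, p⟫_ℝ + b k = 0)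
    (hothers : ∀ j ≠ k, ⟪w j, p⟫_ℝ + b j ≠ 0) : a k * ⟪z, w k⟫_ℝ = 0 := by
  set N := U ∩ {y | ∀ j ≠ k, (0 < ⟪w j, y⟫_ℝ + b j ↔ 0 < ⟪w j, p⟫_ℝ + b j)}
  have hN : N ∈ 𝓝 p := inter_mem (hU.mem_nhds hpU) <| eventually_all.mpr fun j => by
    by_cases hjk : j = k
    · exact Eventually.of_forall fun _ h => absurd hjk h
    · filter_upwards [eventually_pos_iff_of_ne_zero (g := fun y => ⟪w j, y⟫_ℝ + b j)
        (by fun_prop) (hothers j hjk)] with y hy _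
      exact hy
  have hside : ∀ S, IsOpen S → p ∈ closure S →
      ∃ x ∈ N, x ∈ S ∧ (x ∈ U → ⟪z, reluNetGrad a w b v x⟫_ℝ = 0) := fun S hS hpS =>
    mem_closure_iff_nhds.mp (closure_minimal (hdense.open_subset_closure_inter hS)
      isClosed_closure hpS) N hN
  obtain ⟨x, ⟨hxU, hx⟩, hxk, hxz⟩ := hside _ (isOpen_lt continuous_const (by fun_prop))
    (mem_closure_setOf_inner_add_pos hwk hk)
  obtain ⟨y, ⟨hyU, hy⟩, hyk, hyz⟩ := hside _ (isOpen_lt continuous_const (by fun_prop))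
    (mem_closure_setOf_inner_add_pos (neg_ne_zero.mpr hwk) (t := -b k)
      (by rw [inner_neg_left]; linarith))
  have hyk' : ¬ 0 < ⟪w k, y⟫_ℝ + b k := by
    have hneg : 0 < ⟪-w k, y⟫_ℝ + -b k := hyk
    rw [inner_neg_left] at hneg; linarith
  calc a k * ⟪z, w k⟫_ℝ = ⟪z, reluNetGrad a w b v x - reluNetGrad a w b v y⟫_ℝ := by
        rw [reluNetGrad_sub_reluNetGrad a w b v hxk hyk' fun j hj => (hx j hj).trans (hy j hj).symm,
          real_inner_smul_right]
    _ = 0 := by rw [inner_sub_right, hxz hxU, hyz hyU, sub_self]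

end ReluNet

lemma dense_inner_reluNetGrad_eq_zero_of_gradCov_mulVec_eq_zero {d : ℕ} {ι : Type*} [Fintype ι]
    {X : Set (Euc d)} {ρ : Euc d → ℝ} {f : Euc d → ℝ} {a : ι → ℝ} {w : ι → Euc d}
    {b : ι → ℝ} {v : Euc d} {c : ℝ} (hX : Convex ℝ X) (hρ : IsDensityOn X ρ)
    (hf : ∀ x ∈ X, f x = reluNet a w b v c x) (hw : ∀ k, w k ≠ 0) {z : Euc d}
    (hz : gradCov ρ f *ᵥ z = 0) : Dense {x | x ∈ X → ⟪z, reluNetGrad a w b v x⟫_ℝ = 0} := by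
  obtain ⟨-, hρpos, hρzero, hρ1⟩ := hρ
  set G := reluNetGrad a w b v
  have hρ0 : 0 ≤ ρ := fun x => by
    by_cases hx : x ∈ X
    exacts [(hρpos x hx).le, (hρzero x hx).ge]
  have hρint : Integrable ρ := Integrable.of_integral_ne_zero (by rw [hρ1]; exact one_ne_zero)
  have hgrad : ∀ᵐ x, ρ x = 0 ∨ gradient f x = G x := by
    filter_upwards [ae_gradient_eq_reluNetGrad a w b v c volume hX hf hw] with x hx
    by_cases hxX : x ∈ X
    exacts [Or.inr (hx hxX), Or.inl (hρzero x hxX)]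
  have hcov : gradCov ρ f = Matrix.of fun i j => ∫ x, G x i * G x j * ρ x := by
    ext i j
    refine integral_congr_ae ?_
    filter_upwards [hgrad] with x hx
    rcases hx with hx | hx <;> simp [hx]
  have hGint : ∀ i j, Integrable fun x => G x i * G x j * ρ x := by
    set B := ‖v‖ + ∑ k, |a k| * ‖w k‖
    have hB : ∀ x i, ‖G x i‖ ≤ B := fun x i =>
      (PiLp.norm_apply_le _ i).trans (norm_reluNetGrad_le a w b v x)
    have hGm : ∀ i, Measurable fun x => G x i := fun i => (measurable_pi_apply i).comp
      ((WithLp.measurable_ofLp 2 _).comp (measurable_reluNetGrad a w b v))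
    intro i j
    refine hρint.bdd_mul (c := B * B) ((hGm i).mul (hGm j)).aestronglyMeasurable ?_
    refine Eventually.of_forall fun x => ?_
    rw [norm_mul]
    exact mul_le_mul (hB x i) (hB x j) (norm_nonneg _) ((norm_nonneg _).trans (hB x i))
  rw [hcov] at hz
  refine Measure.dense_of_ae (μ := volume) ?_
  filter_upwards [ae_eq_zero_or_inner_eq_zero_of_mulVec_eq_zero hρ0 hGint hz] with x hx hxX
  exact hx.resolve_left (hρpos x hxX).ne'

/-- weights of a canonical-form network lie in the range of the gradient
covariance matrix `Σ_ρ(f)`. -/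
theorem weights_mem_range_gradCov {d K : ℕ} (X : Set (Euc d)) (ρ : Euc d → ℝ)
    (hconv : Convex ℝ X) (hint : (interior X).Nonempty) (hρ : IsDensityOn X ρ)
    (a : Fin K → ℝ) (w : Fin K → Euc d) (b : Fin K → ℝ) (v : Euc d) (c : ℝ)
    (f : Euc d → ℝ)
    (hf : ∀ x ∈ X, f x =
      (∑ k, a k * relu ((∑ i, w k i * x i) + b k)) + (∑ i, v i * x i) + c)
    (hw : ∀ k, w k ≠ 0)
    (hdist : ∀ j k : Fin K, j ≠ k →
      {x : Euc d | (∑ i, w j i * x i) + b j = 0} ≠ {x : Euc d | (∑ i, w k i * x i) + b k = 0})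
    (hinter : ∀ k, ({x : Euc d | (∑ i, w k i * x i) + b k = 0} ∩ interior X).Nonempty) :
    (∃ z : Fin d → ℝ, (gradCov ρ f).mulVec z = v) ∧
      ∀ k, a k ≠ 0 → ∃ z : Fin d → ℝ, (gradCov ρ f).mulVec z = w k := by
  have hinner : ∀ u x : Euc d, ∑ i, u i * x i = ⟪u, x⟫_ℝ := fun u x => by
    simp [PiLp.inner_apply, mul_comm]
  simp only [hinner] at hf hdist hinter
  have hdense : ∀ z : Euc d, gradCov ρ f *ᵥ z = 0 →
      Dense {x | x ∈ interior X → ⟪z, reluNetGrad a w b v x⟫_ℝ = 0} := fun z hz => by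
    refine (dense_inner_reluNetGrad_eq_zero_of_gradCov_mulVec_eq_zero hconv hρ hf hw hz).mono ?_
    exact fun x hx hxX => hx (interior_subset hxX)
  have hwk : ∀ z : Euc d, gradCov ρ f *ᵥ z = 0 → ∀ k, a k ≠ 0 → ⟪z, w k⟫_ℝ = 0 := by
    intro z hz k hak
    obtain ⟨p, hpX, hpk, hpj⟩ :=
      exists_mem_hyperplane_notMem_others isOpen_interior hw hdist (hinter k)
    exact (mul_eq_zero.mp (mul_inner_eq_zero_of_dense_inner_reluNetGrad_eq_zero a w b v
      isOpen_interior (hdense z hz) hpX (hw k) hpk hpj)).resolve_left hak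
  have hv : ∀ z : Euc d, gradCov ρ f *ᵥ z = 0 → ⟪z, v⟫_ℝ = 0 := by
    intro z hz
    obtain ⟨x, hx, hxX⟩ := (hdense z hz).exists_mem_open isOpen_interior hint
    rw [← inner_reluNetGrad_eq_inner_of_forall a w b v (hwk z hz) x]
    exact hx hxX
  have hM := gradCov_isHermitian ρ f
  exact ⟨hM.exists_mulVec_eq (hv · ·), fun k hak => hM.exists_mulVec_eq (hwk · · k hak)⟩
end
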